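/- arXiv:1711.03436 — 2 statements merged into one kernel-verified Lean document; each statement's English description precedes it below -/
import Mathlib

section
/- If a concrete object ō allocated in available code is ever returned by a library call (r_m ↪ ō for some library function m at some trace point), then at some earlier trace point ō was passed as an argument to some library call x'←m'(y') with y'↪ō, assuming library code cannot allocate ō and the disjoint fields assumption holds. -/
/-- Events (statement steps): allocation, assignment, load, store, and library
call (which assigns the returned concrete object `c` to `x`). -/
inductive Ev (V F M O CO : Type) where
  | alloc (x : V) (o : O) (c : CO)
  | assign (x y : V)
  | load (x y : V) (f : F)
  | store (x : V) (f : F) (y : V)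
  | call (x : V) (m : M) (y : V) (c : CO)

/-- A state: environment and heap. -/
structure St (V F CO : Type) where
  env : V → Option CO
  heap : CO → F → Option CO

/-- Small-step semantics of a single statement. Since only program code is
modeled (library effects appear only as call-return events), all heap writes use
program fields: the disjoint fields assumption is built in. -/
def step {V F M O CO : Type} [DecidableEq V] [DecidableEq F] [DecidableEq CO]
    (σ : St V F CO) : Ev V F M O CO → St V F CO
  | .alloc x _ c => ⟨Function.update σ.env x (some c), σ.heap⟩
  | .assign x y => ⟨Function.update σ.env x (σ.env y), σ.heap⟩
  | .load x y f => ⟨Function.update σ.env x (σ.env y >>= fun c => σ.heap c f), σ.heap⟩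
  | .store x f y =>
      ⟨σ.env, fun c g => if σ.env x = some c ∧ g = f then σ.env y else σ.heap c g⟩
  | .call x _ _ c => ⟨Function.update σ.env x (some c), σ.heap⟩

def runs {V F M O CO : Type} [DecidableEq V] [DecidableEq F] [DecidableEq CO]
    (σ0 : St V F CO) (tr : List (Ev V F M O CO)) : St V F CO :=
  tr.foldl step σ0

/-- The state reached after the first `i` steps of the trace. -/
def stateAt {V F M O CO : Type} [DecidableEq V] [DecidableEq F] [DecidableEq CO]
    (σ0 : St V F CO) (tr : List (Ev V F M O CO)) (i : ℕ) : St V F CO :=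
  runs σ0 (tr.take i)

/-- Well-formedness of events in the two-world model: variables are either
program variables (`Sum.inl`) or library-internal variables (`Sum.inr`), and
fields are program fields or library fields. Allocations occur only in available
code (to program variables); loads and stores are either entirely in program code
(program fields) or entirely in library code (library fields) — the disjoint
fields assumption; assignments may bridge the two worlds (argument passing and
return passing); the `call` event form is unused. -/
def WfEv {V LV F LF M O CO : Type} :
    Ev (V ⊕ LV) (F ⊕ LF) M O CO → Prop
  | .alloc x _ _ => ∃ v : V, x = Sum.inl v
  | .assign _ _ => True
  | .load x y f =>
      (∃ (a b : V) (g : F), x = Sum.inl a ∧ y = Sum.inl b ∧ f = Sum.inl g) ∨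
      (∃ (a b : LV) (g : LF), x = Sum.inr a ∧ y = Sum.inr b ∧ f = Sum.inr g)
  | .store x f y =>
      (∃ (a b : V) (g : F), x = Sum.inl a ∧ y = Sum.inl b ∧ f = Sum.inl g) ∨
      (∃ (a b : LV) (g : LF), x = Sum.inr a ∧ y = Sum.inr b ∧ f = Sum.inr g)
  | .call _ _ _ _ => False

/-!
Induct over the trace with a stronger invariant: every object held by a library variable or
stored in a library field was passed to library code earlier. Allocations write only program
variables and, by the disjoint fields assumption, loads and stores stay within one world, so
the only step that can bring a new object into library code is an assignment of a program
variable to a library variable, i.e. argument passing.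
-/

section LibraryReachability

variable {V LV F LF M O CO : Type}
  [DecidableEq V] [DecidableEq LV] [DecidableEq F] [DecidableEq LF] [DecidableEq CO]

def LibHolds (σ : St (V ⊕ LV) (F ⊕ LF) CO) (c : CO) : Prop :=
  (∃ l, σ.env (.inr l) = some c) ∨ ∃ c' g, σ.heap c' (.inr g) = some c

def PassedToLibBefore (σ0 : St (V ⊕ LV) (F ⊕ LF) CO) (tr : List (Ev (V ⊕ LV) (F ⊕ LF) M O CO))
    (c : CO) (i : ℕ) : Prop :=
  ∃ j < i, ∃ (l : LV) (y : V),
    tr[j]? = some (Ev.assign (.inr l) (.inl y)) ∧ (stateAt σ0 tr j).env (.inl y) = some c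

theorem PassedToLibBefore.mono {σ0 : St (V ⊕ LV) (F ⊕ LF) CO}
    {tr : List (Ev (V ⊕ LV) (F ⊕ LF) M O CO)} {c : CO} {i k : ℕ} (hik : i ≤ k)
    (h : PassedToLibBefore σ0 tr c i) : PassedToLibBefore σ0 tr c k :=
  let ⟨j, hj, rest⟩ := h
  ⟨j, hj.trans_le hik, rest⟩

theorem stateAt_succ (σ0 : St (V ⊕ LV) (F ⊕ LF) CO) (tr : List (Ev (V ⊕ LV) (F ⊕ LF) M O CO))
    (i : ℕ) :
    stateAt σ0 tr (i + 1) = (tr[i]?).elim (stateAt σ0 tr i) (step (stateAt σ0 tr i)) := by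
  unfold stateAt runs
  rw [List.take_add_one, List.foldl_append]
  cases tr[i]? <;> rfl

theorem libHolds_or_passed_of_libHolds_step {σ : St (V ⊕ LV) (F ⊕ LF) CO}
    {e : Ev (V ⊕ LV) (F ⊕ LF) M O CO} {c : CO} (he : WfEv e) (h : LibHolds (step σ e) c) :
    LibHolds σ c ∨
      ∃ (l : LV) (y : V), e = .assign (.inr l) (.inl y) ∧ σ.env (.inl y) = some c := by
  rcases h with ⟨l, hl⟩ | ⟨c', g, hg⟩
  · cases e with
    | alloc x o c₂ =>
      obtain ⟨v, rfl⟩ := he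
      simp only [step, Function.update_apply, reduceCtorEq, if_false] at hl
      exact .inl (.inl ⟨l, hl⟩)
    | assign x y =>
      simp only [step, Function.update_apply] at hl
      split_ifs at hl with hx
      · subst hx
        rcases y with y | l'
        · exact .inr ⟨l, y, rfl, hl⟩
        · exact .inl (.inl ⟨l', hl⟩)
      · exact .inl (.inl ⟨l, hl⟩)
    | load x y f =>
      simp only [step, Function.update_apply] at hl
      split_ifs at hl with hx
      · rcases he with ⟨a, b, g, rfl, -, -⟩ | ⟨a, b, g, -, rfl, rfl⟩
        · cases hx
        · obtain ⟨c₂, -, hc₂⟩ := Option.bind_eq_some_iff.mp hl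
          exact .inl (.inr ⟨c₂, g, hc₂⟩)
      · exact .inl (.inl ⟨l, hl⟩)
    | store x f y => exact .inl (.inl ⟨l, hl⟩)
    | call => exact he.elim
  · cases e with
    | store x f y =>
      simp only [step] at hg
      split_ifs at hg with hx
      · rcases he with ⟨a, b, g', -, -, rfl⟩ | ⟨a, b, g', -, rfl, -⟩
        · cases hx.2
        · exact .inl (.inl ⟨b, hg⟩)
      · exact .inl (.inr ⟨c', g, hg⟩)
    | call => exact he.elim
    | _ => exact .inl (.inr ⟨c', g, hg⟩)

theorem passedToLibBefore_of_libHolds {σ0 : St (V ⊕ LV) (F ⊕ LF) CO}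
    {tr : List (Ev (V ⊕ LV) (F ⊕ LF) M O CO)} {c : CO} (h₀ : ¬ LibHolds σ0 c)
    (hwf : ∀ e ∈ tr, WfEv e) :
    ∀ i, LibHolds (stateAt σ0 tr i) c → PassedToLibBefore σ0 tr c i := by
  intro i
  induction i with
  | zero => exact fun h => absurd h h₀
  | succ i ih =>
    intro h
    rw [stateAt_succ] at h
    cases he : tr[i]? with
    | none =>
      rw [he] at h
      exact (ih h).mono i.le_succ
    | some e =>
      rw [he] at h
      rcases libHolds_or_passed_of_libHolds_step (hwf e (List.mem_of_getElem? he)) h with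
        hprev | ⟨l, y, rfl, hy⟩
      · exact (ih hprev).mono i.le_succ
      · exact ⟨i, i.lt_succ_self, l, y, he, hy⟩

end LibraryReachability

theorem stmt9_general {V LV F LF M O CO : Type}
    [DecidableEq V] [DecidableEq LV] [DecidableEq F] [DecidableEq LF] [DecidableEq CO]
    (ret : M → LV)
    (σ0 : St (V ⊕ LV) (F ⊕ LF) CO)
    (hEnv : ∀ v, σ0.env v = none) (hHeap : ∀ c f, σ0.heap c f = none)
    (tr : List (Ev (V ⊕ LV) (F ⊕ LF) M O CO))
    (hwf : ∀ e ∈ tr, WfEv e)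
    (i : ℕ) (m : M) (c : CO)
    (hret : (stateAt σ0 tr i).env (Sum.inr (ret m)) = some c) :
    ∃ j < i, ∃ (l : LV) (y : V),
      tr[j]? = some (Ev.assign (Sum.inr l) (Sum.inl y)) ∧
      (stateAt σ0 tr j).env (Sum.inl y) = some c := by
  have h₀ : ¬ LibHolds σ0 c := by
    rintro (⟨l, hl⟩ | ⟨c', g, hg⟩)
    · simp [hEnv] at hl
    · simp [hHeap] at hg
  exact passedToLibBefore_of_libHolds h₀ hwf i (.inl ⟨ret m, hret⟩)

/-- If a concrete object `c` allocated in available code is ever held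
by a library variable — in particular if it is returned by a library call, i.e.
the return variable `ret m` of some library function points to `c` at some trace
point `i` — then at some earlier trace point `c` was passed as an argument to
library code: some assignment from a program variable `y` (with `y ↪ c` at that
point) into a library variable occurred. This assumes library code cannot allocate
`c` (allocations only occur at program variables) and the disjoint fields
assumption. -/
theorem stmt9 {V LV F LF M O CO : Type}
    [DecidableEq V] [DecidableEq LV] [DecidableEq F] [DecidableEq LF] [DecidableEq CO]
    (ret : M → LV)
    (σ0 : St (V ⊕ LV) (F ⊕ LF) CO)
    (hEnv : ∀ v, σ0.env v = none) (hHeap : ∀ c f, σ0.heap c f = none)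
    (tr : List (Ev (V ⊕ LV) (F ⊕ LF) M O CO))
    (hwf : ∀ e ∈ tr, WfEv e)
    (hFresh : ∀ i x o c, tr[i]? = some (.alloc x o c) →
      (∀ v, (stateAt σ0 tr i).env v ≠ some c) ∧
      (∀ c' f, (stateAt σ0 tr i).heap c' f ≠ some c))
    (i : ℕ) (m : M) (c : CO)
    (hret : (stateAt σ0 tr i).env (Sum.inr (ret m)) = some c)
    (hprog : ∃ (x' : V) (o : O), Ev.alloc (Sum.inl x') o c ∈ tr) :
    ∃ j < i, ∃ (l : LV) (y : V),
      tr[j]? = some (Ev.assign (Sum.inr l) (Sum.inl y)) ∧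
      (stateAt σ0 tr j).env (Sum.inl y) = some c :=
  stmt9_general ret σ0 hEnv hHeap tr hwf i m c hret
end

section
/- Soundness of ideal proxy objects: if x↪ō occurs during an execution, then (i) if ō is allocated at program allocation site o, the edge x↪o is in the least fixed point Π̃* computed with Π_miss = Π̃*_miss, and (ii) if ō is allocated in missing code with ideal proxy p̃ = φ̃(ō) (its dynamic footprint), then x↪p̃ ∈ Π̃*. -/
/-- The dynamic footprint of a concrete object `c`: the set of visible variables
that ever point to `c` during the execution. This is the ideal proxy object of a
concrete object allocated in missing code. -/
def footprint {V F M O CO : Type} [DecidableEq V] [DecidableEq F] [DecidableEq CO]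
    (σ0 : St V F CO) (tr : List (Ev V F M O CO)) (c : CO) : Set V :=
  {v | ∃ i, (stateAt σ0 tr i).env v = some c}

/-- The points-to relation `Π̃*`: the least relation over abstract objects
`O ⊕ Set V` (program allocation sites and ideal proxy objects) closed under the
static rules and containing all missing edges `Π̃*_miss`, i.e. the edges arising
at library-call assignments during the execution (rules `missProg` and
`missProxy`). -/
inductive PDerives {V F M O CO : Type} [DecidableEq V] [DecidableEq F] [DecidableEq CO]
    (σ0 : St V F CO) (tr : List (Ev V F M O CO)) : V → O ⊕ Set V → Prop where
  | alloc {x o c} : Ev.alloc x o c ∈ tr → PDerives σ0 tr x (Sum.inl o)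
  | assign {x y a} : Ev.assign x y ∈ tr → PDerives σ0 tr y a → PDerives σ0 tr x a
  | loadstore {x y z w : V} {f : F} {a a' : O ⊕ Set V} :
      Ev.load x y f ∈ tr → Ev.store z f w ∈ tr →
      PDerives σ0 tr y a' → PDerives σ0 tr z a' → PDerives σ0 tr w a →
      PDerives σ0 tr x a
  | missProg {x : V} {m : M} {y x' : V} {o : O} {c : CO} :
      Ev.call x m y c ∈ tr → Ev.alloc x' o c ∈ tr → PDerives σ0 tr x (Sum.inl o)
  | missProxy {x : V} {m : M} {y : V} {c : CO} :
      Ev.call x m y c ∈ tr → (∀ (x' : V) (o : O), Ev.alloc x' o c ∉ tr) →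
      PDerives σ0 tr x (Sum.inr (footprint σ0 tr c))

/-!
Say that a variable `v` covers a concrete object `c` when `v` points, in `Π̃*`, to the
abstraction of `c`: its allocation site, or its ideal proxy when it is allocated in missing
code. By induction along the execution, every variable covers the object it points to, and
every heap cell `c'.f ↦ c` was written by a program store `z.f = w` with `z` covering `c'`
and `w` covering `c`. A load `x = y.f` of that cell is then justified by the load/store
rule, because `y` and `z` share the abstraction of `c'`; the value returned by a library
call is covered by the missing edges, and an allocation by the allocation rule since each
object has a single allocation site.
-/

section Soundness

variable {V F M O CO : Type} {σ0 : St V F CO} {tr : List (Ev V F M O CO)}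

variable (tr) in
def AllocSiteUnique : Prop :=
  ∀ {x x' : V} {o o' : O} {c : CO}, Ev.alloc x o c ∈ tr → Ev.alloc x' o' c ∈ tr → o = o'

theorem allocSiteUnique_of_index_unique
    (hUniq : ∀ (i j : ℕ) (x x' : V) (o o' : O) (c : CO),
      tr[i]? = some (Ev.alloc x o c) → tr[j]? = some (Ev.alloc x' o' c) → i = j) :
    AllocSiteUnique tr := by
  intro x x' o o' c h h'
  obtain ⟨i, hi⟩ := List.mem_iff_getElem?.mp h
  obtain ⟨j, hj⟩ := List.mem_iff_getElem?.mp h'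
  obtain rfl := hUniq i j x x' o o' c hi hj
  rw [hi] at hj
  cases hj
  rfl

variable [DecidableEq V] [DecidableEq F] [DecidableEq CO]

variable (σ0 tr) in
def Covers (v : V) (c : CO) : Prop :=
  (∀ (x' : V) (o : O), Ev.alloc x' o c ∈ tr → PDerives σ0 tr v (Sum.inl o)) ∧
  ((∀ (x' : V) (o : O), Ev.alloc x' o c ∉ tr) →
    PDerives σ0 tr v (Sum.inr (footprint σ0 tr c)))

theorem Covers.of_derives {v w : V} {c : CO} (h : Covers σ0 tr w c)
    (hder : ∀ a, PDerives σ0 tr w a → PDerives σ0 tr v a) : Covers σ0 tr v c :=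
  ⟨fun x' o hx' => hder _ (h.1 x' o hx'), fun hno => hder _ (h.2 hno)⟩

theorem Covers.exists_common {y z : V} {c : CO} (hy : Covers σ0 tr y c)
    (hz : Covers σ0 tr z c) : ∃ a, PDerives σ0 tr y a ∧ PDerives σ0 tr z a := by
  by_cases h : ∃ (x' : V) (o : O), Ev.alloc x' o c ∈ tr
  · obtain ⟨x', o, hx'⟩ := h
    exact ⟨Sum.inl o, hy.1 x' o hx', hz.1 x' o hx'⟩
  · push Not at h
    exact ⟨Sum.inr (footprint σ0 tr c), hy.2 h, hz.2 h⟩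

theorem covers_of_alloc
    (hsite : AllocSiteUnique tr) {x : V} {o : O} {c : CO} (h : Ev.alloc x o c ∈ tr) : Covers σ0 tr x c :=
  ⟨fun _ _ h' => hsite h h' ▸ PDerives.alloc h, fun hno => absurd h (hno x o)⟩

theorem covers_of_call {x y : V} {m : M} {c : CO} (h : Ev.call x m y c ∈ tr) :
    Covers σ0 tr x c :=
  ⟨fun _ _ h' => PDerives.missProg h h', PDerives.missProxy h⟩

theorem Covers.load {x y z w : V} {f : F} {c' c : CO}
    (hl : Ev.load x y f ∈ tr) (hs : Ev.store z f w ∈ tr)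
    (hy : Covers σ0 tr y c') (hz : Covers σ0 tr z c') (hw : Covers σ0 tr w c) :
    Covers σ0 tr x c := by
  obtain ⟨a', hya', hza'⟩ := hy.exists_common hz
  exact hw.of_derives fun _ => PDerives.loadstore hl hs hya' hza'

variable (σ0 tr) in
def EnvSound (ρ : V → Option CO) : Prop :=
  ∀ v c, ρ v = some c → Covers σ0 tr v c

variable (σ0 tr) in
def HeapSound (H : CO → F → Option CO) : Prop :=
  ∀ c' f c, H c' f = some c →
    ∃ z w, Ev.store z f w ∈ tr ∧ Covers σ0 tr z c' ∧ Covers σ0 tr w c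

variable (σ0 tr) in
def SoundState (σ : St V F CO) : Prop :=
  EnvSound σ0 tr σ.env ∧ HeapSound σ0 tr σ.heap

theorem EnvSound.update {ρ : V → Option CO} (hρ : EnvSound σ0 tr ρ) {x : V}
    {r : Option CO} (hx : ∀ c, r = some c → Covers σ0 tr x c) :
    EnvSound σ0 tr (Function.update ρ x r) := by
  intro v c hv
  rcases eq_or_ne v x with rfl | hvx
  · exact hx c (by simpa using hv)
  · exact hρ v c (by simpa [hvx] using hv)

theorem SoundState.step_of_mem (hsite : AllocSiteUnique tr)
    {σ : St V F CO} (hσ : SoundState σ0 tr σ) {e : Ev V F M O CO} (he : e ∈ tr) :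
    SoundState σ0 tr (step σ e) := by
  obtain ⟨hρ, hH⟩ := hσ
  cases e with
  | alloc x o c =>
    exact ⟨hρ.update fun _ h => Option.some_injective _ h ▸ covers_of_alloc hsite he, hH⟩
  | assign x y =>
    exact ⟨hρ.update fun c h => (hρ y c h).of_derives fun _ => PDerives.assign he, hH⟩
  | load x y f =>
    refine ⟨hρ.update fun c h => ?_, hH⟩
    obtain ⟨c', hy, hc⟩ := Option.bind_eq_some_iff.mp h
    obtain ⟨z, w, hs, hz, hw⟩ := hH c' f c hc
    exact Covers.load he hs (hρ y c' hy) hz hw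
  | store x f y =>
    refine ⟨hρ, fun c' g c hc => ?_⟩
    dsimp only [step] at hc
    split_ifs at hc with hxg
    · obtain ⟨hx, rfl⟩ := hxg
      exact ⟨x, y, he, hρ x c' hx, hρ y c hc⟩
    · exact hH c' g c hc
  | call x m y c =>
    exact ⟨hρ.update fun _ h => Option.some_injective _ h ▸ covers_of_call he, hH⟩

theorem SoundState.foldl_step (hsite : AllocSiteUnique tr)
    {l : List (Ev V F M O CO)} (hl : l ⊆ tr) {σ : St V F CO} (hσ : SoundState σ0 tr σ) :
    SoundState σ0 tr (l.foldl step σ) := by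
  induction l generalizing σ with
  | nil => exact hσ
  | cons e l ih =>
    obtain ⟨he, hl⟩ := List.cons_subset.mp hl
    exact ih hl (hσ.step_of_mem hsite he)

theorem soundState_of_empty (hEnv : ∀ v, σ0.env v = none)
    (hHeap : ∀ c f, σ0.heap c f = none) : SoundState σ0 tr σ0 :=
  ⟨fun v c h => by simp [hEnv] at h, fun c' f c h => by simp [hHeap] at h⟩

end Soundness

theorem stmt11_general {V F M O CO : Type} [DecidableEq V] [DecidableEq F] [DecidableEq CO]
    (σ0 : St V F CO)
    (hEnv : ∀ v, σ0.env v = none) (hHeap : ∀ c f, σ0.heap c f = none)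
    (tr : List (Ev V F M O CO))
    (hUniq : ∀ (i j : ℕ) (x x' : V) (o o' : O) (c : CO),
      tr[i]? = some (Ev.alloc x o c) → tr[j]? = some (Ev.alloc x' o' c) → i = j)
    (i : ℕ) (x : V) (c : CO)
    (hdyn : (stateAt σ0 tr i).env x = some c) :
    (∀ (x' : V) (o : O), Ev.alloc x' o c ∈ tr → PDerives σ0 tr x (Sum.inl o)) ∧
    ((∀ (x' : V) (o : O), Ev.alloc x' o c ∉ tr) →
      PDerives σ0 tr x (Sum.inr (footprint σ0 tr c))) :=
  have hsound : SoundState σ0 tr (stateAt σ0 tr i) :=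
    SoundState.foldl_step (allocSiteUnique_of_index_unique hUniq) (List.take_subset i tr)
      (soundState_of_empty hEnv hHeap)
  hsound.1 x c hdyn

/-- Soundness of ideal proxy objects: if `x ↪ c` occurs during the
execution, then (i) if `c` is allocated at a program allocation site `o`, the edge
`x ↪ o` is in `Π̃*`, and (ii) if `c` is allocated in missing code (never at a
program allocation), then `x ↪ p̃` is in `Π̃*`, where `p̃` is the ideal proxy
object of `c`, its dynamic footprint. -/
theorem stmt11 {V F M O CO : Type} [DecidableEq V] [DecidableEq F] [DecidableEq CO]
    (σ0 : St V F CO)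
    (hEnv : ∀ v, σ0.env v = none) (hHeap : ∀ c f, σ0.heap c f = none)
    (tr : List (Ev V F M O CO))
    (hFresh : ∀ i x o c, tr[i]? = some (.alloc x o c) →
      (∀ v, (stateAt σ0 tr i).env v ≠ some c) ∧
      (∀ c' f, (stateAt σ0 tr i).heap c' f ≠ some c))
    (hUniq : ∀ (i j : ℕ) (x x' : V) (o o' : O) (c : CO),
      tr[i]? = some (Ev.alloc x o c) → tr[j]? = some (Ev.alloc x' o' c) → i = j)
    (i : ℕ) (x : V) (c : CO)
    (hdyn : (stateAt σ0 tr i).env x = some c) :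
    (∀ (x' : V) (o : O), Ev.alloc x' o c ∈ tr → PDerives σ0 tr x (Sum.inl o)) ∧
    ((∀ (x' : V) (o : O), Ev.alloc x' o c ∉ tr) →
      PDerives σ0 tr x (Sum.inr (footprint σ0 tr c))) :=
  stmt11_general σ0 hEnv hHeap tr hUniq i x c hdyn
end
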